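/- For every real number r ≥ √2, the number of lattice points in the closed disk of radius r satisfies the strict lower bound π(r − √2)² < C(r). -/

import Mathlib

noncomputable def C (r : ℝ) : ℕ :=
  Nat.card {p : ℤ × ℤ // (p.1 : ℝ) ^ 2 + (p.2 : ℝ) ^ 2 ≤ r ^ 2}

/-!
Round each point of the plane to a nearest lattice point, coordinatewise. The fibres of this
rounding map are unit squares, and a point lies within `√2 / 2` of its rounding. Hence the disk of
radius `r - √2 / 2` is covered by the squares of the lattice points in the disk of radius `r`,
which gives `π (r - √2 / 2)² ≤ C(r)`, strictly more than `π (r - √2)²`. The same comparison, run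
the other way, shows that there are finitely many such lattice points.
-/

open Complex MeasureTheory Metric Real Set
open scoped ENNReal

theorem Complex.volume_reProdIm (s t : Set ℝ) : volume (s ×ℂ t) = volume s * volume t := by
  rw [← preimage_equivRealProd_prod, ← Measure.prod_prod, ← Measure.volume_eq_prod]
  exact volume_preserving_equiv_real_prod.measure_preimage_equiv (s ×ˢ t)

def latticePoint (p : ℤ × ℤ) : ℂ := ⟨p.1, p.2⟩

def latticeDisk (r : ℝ) : Set (ℤ × ℤ) := latticePoint ⁻¹' closedBall 0 r

noncomputable def roundGaussian (z : ℂ) : ℤ × ℤ := (round z.re, round z.im)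

section RoundingFibres

variable (p : ℤ × ℤ)

theorem preimage_roundGaussian_singleton :
    roundGaussian ⁻¹' {p} =
      Ico (p.1 - 1 / 2 : ℝ) (p.1 + 1 / 2) ×ℂ Ico (p.2 - 1 / 2 : ℝ) (p.2 + 1 / 2) := by
  ext z
  simp [roundGaussian, Prod.ext_iff, round_eq_iff, mem_reProdIm]

theorem measurableSet_preimage_roundGaussian_singleton :
    MeasurableSet (roundGaussian ⁻¹' {p}) := by
  rw [preimage_roundGaussian_singleton]
  exact (measurableSet_Ico.prod measurableSet_Ico).preimage measurableEquivRealProd.measurable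

theorem volume_preimage_roundGaussian_singleton : volume (roundGaussian ⁻¹' {p}) = 1 := by
  rw [preimage_roundGaussian_singleton, volume_reProdIm, Real.volume_Ico, Real.volume_Ico]
  norm_num

end RoundingFibres

theorem volume_preimage_roundGaussian (S : Set (ℤ × ℤ)) :
    volume (roundGaussian ⁻¹' S) = S.encard := by
  rw [← tsum_measure_preimage_singleton S.to_countable
    fun p _ => measurableSet_preimage_roundGaussian_singleton p]
  simp [volume_preimage_roundGaussian_singleton]

theorem norm_sub_latticePoint_roundGaussian_le (z : ℂ) :
    ‖z - latticePoint (roundGaussian z)‖ ≤ √2 / 2 :=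
  calc ‖z - latticePoint (roundGaussian z)‖
      ≤ √2 * max |z.re - round z.re| |z.im - round z.im| := norm_le_sqrt_two_mul_max _
    _ ≤ √2 * (1 / 2) := by gcongr; exact max_le (abs_sub_round _) (abs_sub_round _)
    _ = √2 / 2 := by ring

theorem abs_norm_sub_norm_latticePoint_roundGaussian_le (z : ℂ) :
    |‖z‖ - ‖latticePoint (roundGaussian z)‖| ≤ √2 / 2 :=
  (abs_norm_sub_norm_le _ _).trans (norm_sub_latticePoint_roundGaussian_le z)

theorem closedBall_subset_preimage_roundGaussian_latticeDisk (r : ℝ) :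
    closedBall 0 (r - √2 / 2) ⊆ roundGaussian ⁻¹' latticeDisk r := by
  intro z hz
  have := (abs_le.mp (abs_norm_sub_norm_latticePoint_roundGaussian_le z)).1
  simp only [latticeDisk, mem_preimage, mem_closedBall_zero_iff] at hz ⊢
  linarith

theorem preimage_roundGaussian_latticeDisk_subset_closedBall (r : ℝ) :
    roundGaussian ⁻¹' latticeDisk r ⊆ closedBall 0 (r + √2 / 2) := by
  intro z hz
  have := (abs_le.mp (abs_norm_sub_norm_latticePoint_roundGaussian_le z)).2
  simp only [latticeDisk, mem_preimage, mem_closedBall_zero_iff] at hz ⊢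
  linarith

theorem finite_latticeDisk (r : ℝ) : (latticeDisk r).Finite := by
  have h := (volume_preimage_roundGaussian _).symm.trans_le
    (measure_mono (preimage_roundGaussian_latticeDisk_subset_closedBall r))
  rw [Complex.volume_closedBall] at h
  exact encard_ne_top_iff.mp (ENat.toENNReal_ne_top.mp (h.trans_lt (by finiteness)).ne)

theorem pi_mul_sq_le_ncard_latticeDisk {r : ℝ} (hr : √2 / 2 ≤ r) :
    π * (r - √2 / 2) ^ 2 ≤ (latticeDisk r).ncard := by
  have h := (measure_mono (closedBall_subset_preimage_roundGaussian_latticeDisk r)).trans_eq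
    (volume_preimage_roundGaussian _)
  rw [Complex.volume_closedBall, ← (finite_latticeDisk r).cast_ncard_eq, ENat.toENNReal_coe] at h
  simpa [ENNReal.toReal_ofReal (sub_nonneg.mpr hr), mul_comm] using
    ENNReal.toReal_mono (ENNReal.natCast_ne_top _) h

theorem mem_latticeDisk_iff {r : ℝ} (hr : 0 ≤ r) (p : ℤ × ℤ) :
    p ∈ latticeDisk r ↔ (p.1 : ℝ) ^ 2 + (p.2 : ℝ) ^ 2 ≤ r ^ 2 := by
  rw [latticeDisk, mem_preimage, mem_closedBall_zero_iff, Complex.norm_def, latticePoint,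
    normSq_mk, Real.sqrt_le_left hr]
  simp only [sq]

theorem C_eq_ncard_latticeDisk {r : ℝ} (hr : 0 ≤ r) : C r = (latticeDisk r).ncard := by
  simp_rw [C, ← mem_latticeDisk_iff hr, ← Nat.card_coe_set_eq]

theorem gauss_circle_lower_bound (r : ℝ) (hr : Real.sqrt 2 ≤ r) :
    Real.pi * (r - Real.sqrt 2) ^ 2 < (C r : ℝ) := by
  have h2 : 0 < √2 := by positivity
  rw [C_eq_ncard_latticeDisk (h2.le.trans hr)]
  calc π * (r - √2) ^ 2 < π * (r - √2 / 2) ^ 2 := by gcongr; linarith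
    _ ≤ ((latticeDisk r).ncard : ℝ) := pi_mul_sq_le_ncard_latticeDisk (by linarith)
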